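/- Let Ω ∈ M_{3d}(ℂ) be the 3×3 block matrix (with d×d blocks) Ω = (1/(j(j+1)d)) · [[J_x J_x, −J_x J_y, J_x J_z], [−J_y J_x, J_y J_y, −J_y J_z], [J_z J_x, −J_z J_y, J_z J_z]], which is the Choi matrix of the channel Φ̃ complementary to the Landau–Streater channel. Then Ω is positive semidefinite (indeed Ω = C†C/(j(j+1)d) for the block row C = [J_x, −J_y, J_z], which satisfies CC† = j(j+1)·I_d) and rank Ω = d = 2j+1. -/

import Mathlib

open Matrix Complex

noncomputable section

/-- Spin-z matrix for spin j = n/2 in dimension d = n+1: diagonal with entries j - k. -/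
def Jz (n : ℕ) : Matrix (Fin (n+1)) (Fin (n+1)) ℂ :=
  Matrix.diagonal fun k => (n : ℂ) / 2 - (k : ℕ)

/-- Raising operator `J₊`, with entries `(J₊)_{k,k+1} = √((k+1)(n-k))`. -/
def Jp (n : ℕ) : Matrix (Fin (n+1)) (Fin (n+1)) ℂ :=
  Matrix.of fun a b =>
    if (a : ℕ) + 1 = (b : ℕ) then ((Real.sqrt (((a : ℕ) + 1) * (n - (a : ℕ))) : ℝ) : ℂ) else 0

/-- Lowering operator `J₋ = (J₊)†`. -/
def Jm (n : ℕ) : Matrix (Fin (n+1)) (Fin (n+1)) ℂ := (Jp n)ᴴ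

/-- `J_x = (J₊ + J₋)/2`. -/
def Jx (n : ℕ) : Matrix (Fin (n+1)) (Fin (n+1)) ℂ := (1/2 : ℂ) • (Jp n + Jm n)

/-- `J_y = (J₊ - J₋)/(2i)`. -/
def Jy (n : ℕ) : Matrix (Fin (n+1)) (Fin (n+1)) ℂ := (1/(2 * Complex.I)) • (Jp n - Jm n)

/-- The Landau–Streater map `Φ(X) = (JₓXJₓ + J_yXJ_y + J_zXJ_z)/(j(j+1))`. -/
def LS (n : ℕ) (X : Matrix (Fin (n+1)) (Fin (n+1)) ℂ) : Matrix (Fin (n+1)) (Fin (n+1)) ℂ :=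
  (((n : ℂ)/2) * ((n : ℂ)/2 + 1))⁻¹ • (Jx n * X * Jx n + Jy n * X * Jy n + Jz n * X * Jz n)

end

/-!
The spin matrices are Hermitian, so the `(α, β)` block `S_α S_β` of `Ω` is `S_α† S_β`, i.e.
`Ω = c · C†C` with `c = 1/(j(j+1)d) > 0`; hence `Ω ⪰ 0`. The other Gram matrix
`CC† = Jₓ² + J_y² + J_z²` is the Casimir operator `j(j+1)·I_d`, computed entrywise from
`J₊J₋` and `J₋J₊`, which are diagonal. Therefore `rank Ω = rank C†C = rank CC† = d`.
-/

open scoped ComplexOrder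

lemma half_smul_add_mul_self_add_smul_sub_mul_self {A : Type*} [Ring A] [Algebra ℂ A] (x y : A) :
    ((1/2 : ℂ) • (x + y)) * ((1/2 : ℂ) • (x + y))
      + ((1/(2 * I)) • (x - y)) * ((1/(2 * I)) • (x - y))
      = (1/2 : ℂ) • (x * y + y * x) := by
  have hI : (1/(2 * I)) * (1/(2 * I)) = -(1/4 : ℂ) := by field_simp; norm_num
  simp only [smul_mul_smul_comm, hI, mul_add, add_mul, mul_sub, sub_mul]
  module

noncomputable def ladderCoeff (n k : ℕ) : ℂ := ((√((k + 1) * (n - k)) : ℝ) : ℂ)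

lemma ladderCoeff_mul_self {n k : ℕ} (hk : k ≤ n) :
    ladderCoeff n k * ladderCoeff n k = (k + 1) * (n - k) := by
  rw [ladderCoeff, ← Complex.ofReal_mul, Real.mul_self_sqrt
    (mul_nonneg (by positivity) (sub_nonneg.2 (by exact_mod_cast hk)))]
  push_cast; ring

section Spin

variable (n : ℕ)

lemma Jp_apply (a b : Fin (n+1)) :
    Jp n a b = if (a : ℕ) + 1 = b then ladderCoeff n a else 0 := rfl

lemma Jm_apply (a b : Fin (n+1)) :
    Jm n a b = if (b : ℕ) + 1 = a then ladderCoeff n b else 0 := by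
  simp [Jm, Jp, ladderCoeff, apply_ite star]

lemma Jp_mul_Jm :
    Jp n * Jm n = diagonal fun k : Fin (n+1) => ((k : ℂ) + 1) * (n - k) := by
  ext a b
  simp only [mul_apply, Jp_apply, Jm_apply]
  rw [Fin.sum_univ_eq_sum_range fun c =>
    (if (a : ℕ) + 1 = c then ladderCoeff n a else 0) *
      if (b : ℕ) + 1 = c then ladderCoeff n b else 0]
  simp only [ite_mul, zero_mul, Finset.sum_ite_eq, Finset.mem_range]
  rcases eq_or_ne a b with rfl | hab
  · rw [diagonal_apply_eq, if_pos rfl]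
    split_ifs with ha
    · exact ladderCoeff_mul_self (by omega)
    · have : (a : ℂ) = n := by norm_cast; omega
      simp [this]
  · have : (b : ℕ) ≠ a := fun h => hab (Fin.ext h.symm)
    simp [diagonal_apply_ne _ hab, this]

lemma Jm_mul_Jp :
    Jm n * Jp n = diagonal fun k : Fin (n+1) => (k : ℂ) * (n + 1 - k) := by
  ext a b
  simp only [mul_apply, Jp_apply, Jm_apply]
  rw [Fin.sum_univ_eq_sum_range fun c =>
    (if c + 1 = (a : ℕ) then ladderCoeff n c else 0) *
      if c + 1 = (b : ℕ) then ladderCoeff n c else 0]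
  obtain ⟨_ | a, ha⟩ := a
  · simp [diagonal_apply]
  simp only [ite_mul, zero_mul, add_left_inj, Finset.sum_ite_eq', Finset.mem_range]
  rcases eq_or_ne ⟨a + 1, ha⟩ b with rfl | hab
  · rw [diagonal_apply_eq, if_pos (by omega), if_pos rfl, ladderCoeff_mul_self (by omega)]
    push_cast; ring
  · have : a + 1 ≠ b := fun h => hab (Fin.ext h)
    simp [diagonal_apply_ne _ hab, this]

lemma Jx_mul_Jx_add_Jy_mul_Jy_add_Jz_mul_Jz :
    Jx n * Jx n + Jy n * Jy n + Jz n * Jz n = ((n : ℂ)/2 * ((n : ℂ)/2 + 1)) • 1 := by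
  rw [Jx, Jy, half_smul_add_mul_self_add_smul_sub_mul_self, Jp_mul_Jm, Jm_mul_Jp, Jz,
    diagonal_mul_diagonal, diagonal_add, ← diagonal_smul, diagonal_add, ← diagonal_one,
    ← diagonal_smul]
  congr 1
  ext k
  simp only [Pi.smul_apply, smul_eq_mul]
  ring

lemma isHermitian_Jx : (Jx n).IsHermitian := by
  simp only [IsHermitian, Jx, Jm, conjTranspose_smul, conjTranspose_add,
    conjTranspose_conjTranspose]
  rw [show star (1/2 : ℂ) = 1/2 by norm_num, add_comm (Jp n)ᴴ]

lemma isHermitian_Jy : (Jy n).IsHermitian := by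
  simp only [IsHermitian, Jy, Jm, conjTranspose_smul, conjTranspose_sub,
    conjTranspose_conjTranspose]
  rw [show star (1/(2 * I)) = -(1/(2 * I)) by simp [Complex.conj_I]]
  module

lemma isHermitian_Jz : (Jz n).IsHermitian :=
  isHermitian_diagonal_of_self_adjoint _ <| by ext k; simp

end Spin

section BlockRow

variable {ι m n R : Type*} [Semiring R] [StarRing R]

lemma blockRow_mul_conjTranspose [Fintype ι] [Fintype n] (S : ι → Matrix m n R) :
    (Matrix.of fun a q => S q.1 a q.2 : Matrix m (ι × n) R) *
      (Matrix.of fun a q => S q.1 a q.2 : Matrix m (ι × n) R)ᴴ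
      = ∑ i, S i * (S i)ᴴ := by
  ext a b
  simp only [mul_apply, conjTranspose_apply, of_apply, Matrix.sum_apply, Fintype.sum_prod_type]

lemma conjTranspose_blockRow_mul_blockRow_apply [Fintype m] (S : ι → Matrix m n R)
    (p q : ι × n) :
    ((Matrix.of fun a q => S q.1 a q.2 : Matrix m (ι × n) R)ᴴ *
      (Matrix.of fun a q => S q.1 a q.2 : Matrix m (ι × n) R)) p q
      = ((S p.1)ᴴ * S q.1) p.2 q.2 := by
  simp only [mul_apply, conjTranspose_apply, of_apply]

end BlockRow

lemma rank_conjTranspose_mul_self_of_mul_conjTranspose_eq_smul_one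
    {m k R : Type*} [Fintype m] [Fintype k] [DecidableEq m]
    [Field R] [PartialOrder R] [StarRing R] [StarOrderedRing R]
    {C : Matrix m k R} {r : R} (hr : r ≠ 0) (hC : C * Cᴴ = r • 1) :
    (Cᴴ * C).rank = Fintype.card m := by
  rw [rank_conjTranspose_mul_self, ← rank_self_mul_conjTranspose, hC,
    rank_smul_of_mem_nonZeroDivisors _ (mem_nonZeroDivisors_of_ne_zero hr), rank_one]

/-- the Choi matrix `Ω` of the complementary channel, the `3×3` block matrix
`Ω = (1/(j(j+1)d)) [[JₓJₓ, -JₓJ_y, JₓJ_z], [-J_yJₓ, J_yJ_y, -J_yJ_z],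
[J_zJₓ, -J_zJ_y, J_zJ_z]]`, satisfies `Ω = C†C/(j(j+1)d)` for the block row
`C = [Jₓ, -J_y, J_z]`, with `CC† = j(j+1)·I_d`; it is positive semidefinite of rank
`d = 2j+1`. -/
theorem choi_matrix_complementary_rank (n : ℕ) (hn : 1 ≤ n)
    (S : Fin 3 → Matrix (Fin (n+1)) (Fin (n+1)) ℂ) (hS : S = ![Jx n, -Jy n, Jz n])
    (Ω : Matrix (Fin 3 × Fin (n+1)) (Fin 3 × Fin (n+1)) ℂ)
    (hΩ : Ω = Matrix.of fun p q =>
      ((((n : ℂ)/2) * ((n : ℂ)/2 + 1) * ((n : ℂ) + 1))⁻¹) * (S p.1 * S q.1) p.2 q.2)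
    (C : Matrix (Fin (n+1)) (Fin 3 × Fin (n+1)) ℂ)
    (hC : C = Matrix.of fun a q => S q.1 a q.2) :
    Ω = ((((n : ℂ)/2) * ((n : ℂ)/2 + 1) * ((n : ℂ) + 1))⁻¹) • (Cᴴ * C) ∧
      C * Cᴴ = (((n : ℂ)/2) * ((n : ℂ)/2 + 1)) •
        (1 : Matrix (Fin (n+1)) (Fin (n+1)) ℂ) ∧
      Ω.PosSemidef ∧ Ω.rank = n + 1 := by
  have hS_herm : ∀ α, (S α)ᴴ = S α := by
    subst hS
    intro α
    fin_cases α
    exacts [isHermitian_Jx n, (isHermitian_Jy n).neg, isHermitian_Jz n]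
  have hn_pos : (0 : ℂ) < n := by exact_mod_cast hn
  have hc : 0 < (((n : ℂ)/2) * ((n : ℂ)/2 + 1) * ((n : ℂ) + 1))⁻¹ := by positivity
  have hr : 0 < ((n : ℂ)/2) * ((n : ℂ)/2 + 1) := by positivity
  have hΩ_eq :
      Ω = ((((n : ℂ)/2) * ((n : ℂ)/2 + 1) * ((n : ℂ) + 1))⁻¹) • (Cᴴ * C) := by
    ext p q
    rw [hΩ, hC, Matrix.smul_apply, conjTranspose_blockRow_mul_blockRow_apply, hS_herm, of_apply,
      smul_eq_mul]
  have hCC : C * Cᴴ = (((n : ℂ)/2) * ((n : ℂ)/2 + 1)) • 1 := by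
    rw [hC, blockRow_mul_conjTranspose, Fin.sum_univ_three, hS_herm, hS_herm, hS_herm, hS]
    simpa using Jx_mul_Jx_add_Jy_mul_Jy_add_Jz_mul_Jz n
  refine ⟨hΩ_eq, hCC, hΩ_eq ▸ (posSemidef_conjTranspose_mul_self C).smul hc.le, ?_⟩
  rw [hΩ_eq, rank_smul_of_mem_nonZeroDivisors _ (mem_nonZeroDivisors_of_ne_zero hc.ne'),
    rank_conjTranspose_mul_self_of_mul_conjTranspose_eq_smul_one hr.ne' hCC, Fintype.card_fin]
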